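/- arXiv:0812.2281 — 2 statements merged into one kernel-verified Lean document; each statement's English description precedes it below -/
import Mathlib

section
/- If θ is a rational number, then Bad⁺_θ = ℝ \ {θq − p : q ∈ ℕ, q ≥ 1, p ∈ ℤ}; that is, x ∈ Bad⁺_θ if and only if θq − x is not an integer for every natural number q ≥ 1. -/
/-!
For rational `θ = a / b`, the quantity `‖θq − x‖_ℤ` depends only on `q` modulo `b`, because
shifting `q` by `b` shifts `θq − x` by the integer `a`. So over `q ≥ 1` it takes only finitely
many values; when none of them is `0`, their minimum `c > 0` already gives `‖θq − x‖_ℤ ≥ c ≥ c/q`.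
-/

/-- `normZ x = ‖x‖_ℤ` is the distance from `x` to the nearest integer. -/
noncomputable def normZ (x : ℝ) : ℝ := ⨅ p : ℤ, |x - (p : ℝ)|

/-- `Bad⁺_θ`: the set of `x` such that for some `c > 0`,
`‖θq − x‖_ℤ ≥ c/q` for all natural numbers `q ≥ 1`. -/
def BadPlus (θ : ℝ) : Set ℝ :=
  {x : ℝ | ∃ c > 0, ∀ q : ℕ, 1 ≤ q → normZ (θ * q - x) ≥ c / q}

theorem Function.Periodic.exists_forall_le_nat {α : Type*} [LinearOrder α] {f : ℕ → α} {b : ℕ}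
    (hf : Function.Periodic f b) (hb : 0 < b) : ∃ n₀, ∀ n, f n₀ ≤ f n := by
  obtain ⟨n₀, -, hmin⟩ := (Finset.range b).exists_min_image f ⟨0, Finset.mem_range.mpr hb⟩
  exact ⟨n₀, fun n => hf.map_mod_nat n ▸ hmin _ (Finset.mem_range.mpr (Nat.mod_lt n hb))⟩

theorem normZ_eq_abs_sub_round (x : ℝ) : normZ x = |x - round x| :=
  le_antisymm (ciInf_le ⟨0, Set.forall_mem_range.mpr fun _ => abs_nonneg _⟩ (round x))
    (le_ciInf (round_le x))

theorem normZ_add_intCast (x : ℝ) (p : ℤ) : normZ (x + p) = normZ x := by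
  rw [normZ_eq_abs_sub_round, normZ_eq_abs_sub_round, round_add_intCast, Int.cast_add,
    add_sub_add_right_eq_sub]

theorem normZ_pos_iff {x : ℝ} : 0 < normZ x ↔ ∀ p : ℤ, x ≠ p := by
  rw [normZ_eq_abs_sub_round, abs_pos, sub_ne_zero]
  exact ⟨fun h p hp => h (by rw [hp, round_intCast]), fun h => h _⟩

theorem periodic_normZ_ratCast_mul_sub (r : ℚ) (x : ℝ) :
    Function.Periodic (fun n : ℕ => normZ (r * n - x)) r.den := fun n => by
  have hshift : (r : ℝ) * ↑(n + r.den) - x = r * n - x + r.num := by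
    have hden : (r : ℝ) * r.den = r.num := by exact_mod_cast r.mul_den_eq_num
    push_cast
    linear_combination hden
  simp only [hshift, normZ_add_intCast]

/-- If `θ` is rational, then `Bad⁺_θ` consists exactly of those `x` such that
`θq − x` is not an integer for every natural number `q ≥ 1`. -/
theorem badPlus_of_rational (θ : ℝ) (hθ : ∃ r : ℚ, (r : ℝ) = θ) :
    BadPlus θ = {x : ℝ | ∀ q : ℕ, 1 ≤ q → ∀ p : ℤ, θ * q - x ≠ (p : ℝ)} := by
  ext x
  constructor
  · rintro ⟨c, hc, hbound⟩ q hq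
    exact normZ_pos_iff.mp ((div_pos hc (by exact_mod_cast hq)).trans_le (hbound q hq))
  · intro hx
    obtain ⟨r, rfl⟩ := hθ
    obtain ⟨n₀, hmin⟩ :=
      ((periodic_normZ_ratCast_mul_sub r x).add_const 1).exists_forall_le_nat r.pos
    have hpos : 0 < normZ (r * (n₀ + 1 : ℕ) - x) := normZ_pos_iff.mpr (hx _ n₀.succ_pos)
    refine ⟨_, hpos, fun q hq => ?_⟩
    obtain ⟨n, rfl⟩ : ∃ n, q = n + 1 := ⟨q - 1, by omega⟩
    calc normZ (r * (n₀ + 1 : ℕ) - x) / (n + 1 : ℕ)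
        ≤ normZ (r * (n₀ + 1 : ℕ) - x) := div_le_self hpos.le (by exact_mod_cast hq)
      _ ≤ normZ (r * (n + 1 : ℕ) - x) := hmin n
end

section
/- Let θ be an irrational real number, let q_i denote the denominator of the i-th convergent of the continued fraction expansion of θ, let Δ_i := ‖θ q_i‖_ℤ, let α = 1/8 and 0 < β < 1, and let N be a natural number. Let E := {θq − p : q ∈ ℕ, 1 ≤ q < q_{N+1}, p ∈ ℤ} ⊆ ℝ. If B ⊆ ℝ is a closed ball of radius ρ with αβΔ_N < 2ρ ≤ Δ_N, then there exists a closed ball W ⊆ B of radius αρ such that for every x ∈ W and every e ∈ E one has |x − e| > αβΔ_N/4; in particular W is disjoint from any union of closed balls of radii at most αβΔ_N/4 centered at the points of E. -/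
/-- `qdenom θ i` is the denominator `q_i` of the `i`-th convergent of the continued
fraction expansion of `θ`. -/
noncomputable def qdenom (θ : ℝ) (i : ℕ) : ℝ := (GenContFract.of θ).dens i

/-- `Delta θ i = Δ_i = ‖θ q_i‖_ℤ`. -/
noncomputable def Delta (θ : ℝ) (i : ℕ) : ℝ := normZ (θ * qdenom θ i)

/-!
Lagrange's best approximation property: for `0 < k < q_{N+1}` and `p ∈ ℤ`,
`|θk - p| ≥ |θq_N - p_N| ≥ Δ_N`. Writing `(k, p)` in the unimodular basis `(q_N, p_N)`,
`(q_{N+1}, p_{N+1})`, the two coefficients have opposite signs, as do `θq_N - p_N` and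
`θq_{N+1} - p_{N+1}`, so the two terms of `θk - p` do not cancel. Hence `E` is
`Δ_N`-separated, and one of the centres `b - 7ρ/8`, `b`, `b + 7ρ/8` lies at distance
`> αβΔ_N/4 + αρ` from `E`.
-/

namespace GenContFract

variable {K : Type*} [Field K] [LinearOrder K] [FloorRing K]

theorem exists_int_contsAux_eq (v : K) (n : ℕ) :
    ∃ a b : ℤ,
      ((GenContFract.of v).contsAux n).a = a ∧ ((GenContFract.of v).contsAux n).b = b := by
  induction n using Nat.twoStepInduction with
  | zero => exact ⟨1, 0, by simp [zeroth_contAux_eq_one_zero]⟩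
  | one => exact ⟨⌊v⌋, 1, by simp [first_contAux_eq_h_one, of_h_eq_floor]⟩
  | more n ih₀ ih₁ =>
    obtain ⟨a₀, b₀, ha₀, hb₀⟩ := ih₀
    obtain ⟨a₁, b₁, ha₁, hb₁⟩ := ih₁
    rcases hs : (GenContFract.of v).s.get? n with _ | gp
    · rw [contsAux_stable_step_of_terminated hs]
      exact ⟨a₁, b₁, ha₁, hb₁⟩
    · obtain ⟨hone, z, hz⟩ := of_partNum_eq_one_and_exists_int_partDen_eq hs
      refine ⟨z * a₁ + a₀, z * b₁ + b₀, ?_⟩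
      simp [contsAux_recurrence hs rfl rfl, hone, hz, ha₀, hb₀, ha₁, hb₁]

theorem exists_int_nums_dens_eq (v : K) (n : ℕ) :
    ∃ a b : ℤ, (GenContFract.of v).nums n = a ∧ (GenContFract.of v).dens n = b := by
  simpa only [num_eq_conts_a, den_eq_conts_b, nth_cont_eq_succ_nth_contAux]
    using exists_int_contsAux_eq v (n + 1)

end GenContFract

theorem exists_mul_add_mul_eq_of_det {R : Type*} [CommRing R] {A B A' B' : R}
    (hdet : (A * B' - B * A') * (A * B' - B * A') = 1) (k p : R) :
    ∃ x y : R, x * B + y * B' = k ∧ x * A + y * A' = p :=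
  ⟨(A * B' - B * A') * (p * B' - k * A'), (A * B' - B * A') * (k * A - p * B),
    by linear_combination k * hdet, by linear_combination p * hdet⟩

theorem one_le_and_nonpos_or_le_neg_one_and_nonneg {x y B B' : ℤ} (hB : 0 < B)
    (hpos : 0 < x * B + y * B') (hlt : x * B + y * B' < B') :
    1 ≤ x ∧ y ≤ 0 ∨ x ≤ -1 ∧ 0 ≤ y := by
  rcases lt_trichotomy x 0 with hx | rfl | hx <;> rcases lt_trichotomy y 0 with hy | rfl | hy
  all_goals first | omega | nlinarith

theorem abs_le_abs_mul_add_mul {u v x y : ℝ} (huv : u * v ≤ 0)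
    (hxy : 1 ≤ x ∧ y ≤ 0 ∨ x ≤ -1 ∧ 0 ≤ y) : |u| ≤ |x * u + y * v| := by
  have key : |u| ^ 2 ≤ |u| * |x * u + y * v| := by
    rw [sq_abs, ← abs_mul]
    rcases hxy with ⟨hx, hy⟩ | ⟨hx, hy⟩
    · exact le_abs.2 (Or.inl (by nlinarith))
    · exact le_abs.2 (Or.inr (by nlinarith))
  nlinarith [abs_nonneg u, abs_nonneg (x * u + y * v)]

namespace GenContFract

variable {θ : ℝ}

theorem not_terminatedAt_of_irrational (hθ : Irrational θ) (n : ℕ) :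
    ¬(GenContFract.of θ).TerminatedAt n := fun h ↦
  let ⟨q, hq⟩ := (terminates_iff_rat θ).1 ⟨n, h⟩
  hθ.ne_rat q hq

theorem dens_pos_of_irrational (hθ : Irrational θ) (n : ℕ) : 0 < (GenContFract.of θ).dens n :=
  calc (0 : ℝ) < Nat.fib (n + 1) := mod_cast Nat.fib_pos.2 n.succ_pos
    _ ≤ _ := succ_nth_fib_le_of_nth_den (Or.inr (not_terminatedAt_of_irrational hθ _))

theorem exists_stream_eq_some_fr_pos (hθ : Irrational θ) (n : ℕ) :
    ∃ ifp, IntFractPair.stream θ n = some ifp ∧ 0 < ifp.fr := by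
  have hsucc : IntFractPair.stream θ (n + 1) ≠ none := fun h ↦
    not_terminatedAt_of_irrational hθ n
      (of_terminatedAt_n_iff_succ_nth_intFractPair_stream_eq_none.2 h)
  rcases h : IntFractPair.stream θ n with _ | ifp
  · exact absurd (IntFractPair.succ_nth_stream_eq_none_iff.2 (Or.inl h)) hsucc
  · refine ⟨ifp, rfl, (IntFractPair.nth_stream_fr_nonneg h).lt_of_ne' fun h0 ↦ ?_⟩
    exact hsucc (IntFractPair.succ_nth_stream_eq_none_iff.2 (Or.inr ⟨ifp, h, h0⟩))

theorem neg_one_pow_mul_mul_dens_sub_nums_pos (hθ : Irrational θ) (n : ℕ) :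
    0 < (-1) ^ n * (θ * (GenContFract.of θ).dens n - (GenContFract.of θ).nums n) := by
  obtain ⟨ifp, hifp, hfr⟩ := exists_stream_eq_some_fr_pos hθ n
  have hdens := dens_pos_of_irrational hθ n
  have hsub := sub_convs_eq hifp
  simp only [if_neg hfr.ne', ← nth_cont_eq_succ_nth_contAux, ← den_eq_conts_b] at hsub
  have hden : 0 < (GenContFract.of θ).dens n *
      (ifp.fr⁻¹ * (GenContFract.of θ).dens n + ((GenContFract.of θ).contsAux n).b) := by
    have := zero_le_of_contsAux_b (v := θ) (n := n)
    positivity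
  have hsq : ((-1 : ℝ) ^ n) ^ 2 = 1 := by rw [← pow_mul, mul_comm, pow_mul, neg_one_sq, one_pow]
  have hmul : θ * (GenContFract.of θ).dens n - (GenContFract.of θ).nums n =
      (GenContFract.of θ).dens n * (θ - (GenContFract.of θ).convs n) := by
    rw [conv_eq_num_div_den]; field_simp
  rw [hmul, hsub, mul_left_comm, ← mul_div_assoc, ← mul_div_assoc, ← sq, hsq, mul_one]
  exact div_pos hdens hden

theorem abs_mul_dens_sub_nums_le (hθ : Irrational θ) (n : ℕ) {k p : ℤ} (hk : 0 < k)
    (hkn : (k : ℝ) < (GenContFract.of θ).dens (n + 1)) :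
    |θ * (GenContFract.of θ).dens n - (GenContFract.of θ).nums n| ≤ |θ * k - p| := by
  obtain ⟨A, B, hA, hB⟩ := exists_int_nums_dens_eq θ n
  obtain ⟨A', B', hA', hB'⟩ := exists_int_nums_dens_eq θ (n + 1)
  have hdet : (A * B' - B * A') * (A * B' - B * A') = 1 := by
    have h : ((A * B' - B * A' : ℤ) : ℝ) = (-1) ^ (n + 1) := by
      push_cast
      rw [← hA, ← hB, ← hA', ← hB']
      exact (SimpContFract.of θ).determinant (not_terminatedAt_of_irrational hθ n)
    exact_mod_cast (show ((A * B' - B * A' : ℤ) : ℝ) * ((A * B' - B * A' : ℤ) : ℝ) = 1 by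
      rw [h, ← mul_pow]; norm_num)
  obtain ⟨x, y, hkxy, hpxy⟩ := exists_mul_add_mul_eq_of_det hdet k p
  have hB0 : 0 < B := by exact_mod_cast hB ▸ dens_pos_of_irrational hθ n
  have hkB' : k < B' := by exact_mod_cast hB' ▸ hkn
  have hxy := one_le_and_nonpos_or_le_neg_one_and_nonneg hB0 (hkxy ▸ hk) (hkxy ▸ hkB')
  have huv : (θ * B - A) * (θ * B' - A') ≤ 0 := by
    have h := mul_pos (neg_one_pow_mul_mul_dens_sub_nums_pos hθ n)
      (neg_one_pow_mul_mul_dens_sub_nums_pos hθ (n + 1))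
    rw [hA, hB, hA', hB'] at h
    have hodd : ((-1 : ℝ) ^ n) * (-1) ^ (n + 1) = -1 := by
      rw [← pow_add]; exact Odd.neg_one_pow ⟨n, by ring⟩
    nlinarith
  have hlin : θ * k - p = x * (θ * B - A) + y * (θ * B' - A') := by
    have hk' : (x * B + y * B' : ℝ) = k := by exact_mod_cast hkxy
    have hp' : (x * A + y * A' : ℝ) = p := by exact_mod_cast hpxy
    linear_combination (-θ) * hk' + hp'
  rw [hA, hB, hlin]
  exact abs_le_abs_mul_add_mul huv (by exact_mod_cast hxy)

end GenContFract

theorem normZ_le (x : ℝ) (p : ℤ) : normZ x ≤ |x - p| :=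
  ciInf_le ⟨0, by rintro y ⟨q, rfl⟩; positivity⟩ p

theorem normZ_nonneg (x : ℝ) : 0 ≤ normZ x := le_ciInf fun _ ↦ abs_nonneg _

theorem normZ_le_one (x : ℝ) : normZ x ≤ 1 :=
  (normZ_le x (round x)).trans ((abs_sub_round x).trans (by norm_num))

theorem Delta_le_abs_mul_sub {θ : ℝ} (hθ : Irrational θ) (N : ℕ) {k p : ℤ} (hk : 0 < k)
    (hkN : (k : ℝ) < qdenom θ (N + 1)) : Delta θ N ≤ |θ * k - p| := by
  obtain ⟨A, -, hA, -⟩ := GenContFract.exists_int_nums_dens_eq θ N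
  calc Delta θ N ≤ |θ * qdenom θ N - A| := normZ_le _ A
    _ ≤ |θ * k - p| := hA ▸ GenContFract.abs_mul_dens_sub_nums_le hθ N hk hkN

/-- The set `E`. -/
def orbitPoints (θ : ℝ) (N : ℕ) : Set ℝ :=
  {y | ∃ q : ℕ, 1 ≤ q ∧ (q : ℝ) < qdenom θ (N + 1) ∧ ∃ p : ℤ, y = θ * q - p}

theorem Delta_le_abs_sub_of_mem_orbitPoints {θ : ℝ} (hθ : Irrational θ) (N : ℕ) :
    ∀ e ∈ orbitPoints θ N, ∀ e' ∈ orbitPoints θ N, e ≠ e' →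
      Delta θ N ≤ |e - e'| := by
  rintro _ ⟨q, hq, hqN, p, rfl⟩ _ ⟨q', hq', hqN', p', rfl⟩ hne
  wlog hle : q' ≤ q generalizing q q' p p'
  · rw [abs_sub_comm]
    exact this q' hq' hqN' p' q hq hqN p hne.symm (by omega)
  have hdiff :
      θ * q - p - (θ * q' - p') = θ * ((q - q' : ℤ) : ℝ) - ((p - p' : ℤ) : ℝ) := by
    push_cast; ring
  rw [hdiff]
  rcases hle.lt_or_eq with hlt | rfl
  · refine Delta_le_abs_mul_sub hθ N (by omega) ?_
    have : (1 : ℝ) ≤ q' := by exact_mod_cast hq'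
    push_cast
    linarith
  · have hp : p - p' ≠ 0 := fun h ↦ hne (by rw [sub_eq_zero.1 h])
    calc Delta θ N ≤ 1 := normZ_le_one _
      _ ≤ _ := by
        rw [sub_self, Int.cast_zero, mul_zero, zero_sub, abs_neg, ← Int.cast_abs]
        exact_mod_cast Int.one_le_abs hp

/-- The witness is one of `b - s`, `b`, `b + s`: a point of `E` cannot be `r`-close to both
`b ± s`, and two distinct points of `E` cannot be `r`-close to neighbouring ones. -/
theorem exists_abs_sub_le_forall_lt_abs_sub {E : Set ℝ} {δ r s : ℝ}
    (hE : ∀ e ∈ E, ∀ e' ∈ E, e ≠ e' → δ ≤ |e - e'|) (hs : 0 ≤ s) (hrs : r < s)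
    (hδ : s + 2 * r < δ) (b : ℝ) : ∃ w, |w - b| ≤ s ∧ ∀ e ∈ E, r < |w - e| := by
  by_contra! h
  have eq_of_close : ∀ w w', |w - w'| ≤ s → ∀ e ∈ E, ∀ e' ∈ E,
      |w - e| ≤ r → |w' - e'| ≤ r → e = e' := by
    intro w w' hww' e he e' he' hwe hwe'
    by_contra hne
    have := hE e he e' he' hne
    linarith [abs_sub_le e w e', abs_sub_le w w' e', abs_sub_comm e w]
  have hs' : |b - s - b| ≤ s := by rw [sub_sub_cancel_left, abs_neg, abs_of_nonneg hs]
  obtain ⟨e₁, he₁, h₁⟩ := h (b - s) hs'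
  obtain ⟨e₂, he₂, h₂⟩ := h b (by rwa [sub_self, abs_zero])
  obtain ⟨e₃, he₃, h₃⟩ := h (b + s) (by rw [add_sub_cancel_left, abs_of_nonneg hs])
  have h₁₂ := eq_of_close (b - s) b hs' e₁ he₁ e₂ he₂ h₁ h₂
  have h₂₃ := eq_of_close b (b + s) (by rw [sub_add_cancel_left, abs_neg, abs_of_nonneg hs])
    e₂ he₂ e₃ he₃ h₂ h₃
  subst h₁₂ h₂₃
  have : |b - s - (b + s)| = 2 * s := by
    rw [show b - s - (b + s) = -(2 * s) by ring, abs_neg, abs_of_nonneg (by linarith)]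
  linarith [abs_sub_le (b - s) e₁ (b + s), abs_sub_comm e₁ (b + s)]

/-- Given a closed ball `B` of radius `ρ` with `αβΔ_N < 2ρ ≤ Δ_N` (for `α = 1/8`,
`0 < β < 1`), there is a closed ball `W ⊆ B` of radius `αρ` every point of which
stays at distance `> αβΔ_N/4` from every point `θq − p` (`1 ≤ q < q_{N+1}`, `p ∈ ℤ`). -/
theorem exists_white_ball_avoiding (θ : ℝ) (hθ : Irrational θ) (β : ℝ)
    (hβ0 : 0 < β) (hβ1 : β < 1) (N : ℕ) (b ρ : ℝ)
    (hρ1 : (1 / 8) * β * Delta θ N < 2 * ρ) (hρ2 : 2 * ρ ≤ Delta θ N) :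
    ∃ w : ℝ, Metric.closedBall w ((1 / 8) * ρ) ⊆ Metric.closedBall b ρ ∧
      ∀ x ∈ Metric.closedBall w ((1 / 8) * ρ),
        ∀ e ∈ {y : ℝ | ∃ q : ℕ, 1 ≤ q ∧ (q : ℝ) < qdenom θ (N + 1) ∧
          ∃ p : ℤ, y = θ * q - p},
          |x - e| > (1 / 8) * β * Delta θ N / 4 := by
  have hΔ : 0 ≤ Delta θ N := normZ_nonneg _
  have hρ : 0 < ρ := by nlinarith [mul_nonneg hβ0.le hΔ]
  obtain ⟨w, hwb, hw⟩ := exists_abs_sub_le_forall_lt_abs_sub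
    (Delta_le_abs_sub_of_mem_orbitPoints hθ N) (s := 7 / 8 * ρ)
    (r := (1 / 8) * β * Delta θ N / 4 + 1 / 8 * ρ) (by positivity) (by linarith) (by nlinarith) b
  refine ⟨w, Metric.closedBall_subset_closedBall' (by rw [Real.dist_eq]; linarith), ?_⟩
  intro x hx e he
  rw [Metric.mem_closedBall, Real.dist_eq] at hx
  linarith [hw e he, abs_sub_le w x e, abs_sub_comm x w]
end
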